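/- Ostrowski's theorem on limit sets (as stated and used in the proof of Theorem 3): let (x^k)_{k≥0} be a bounded sequence in a finite-dimensional real normed vector space such that ‖x^{k+1} − x^k‖ → 0 as k → ∞. Then the set of cluster points of (x^k) is nonempty, compact, and connected. -/

import Mathlib

/-!
The sequence lies in a compact ball, so its cluster set `L` is a nonempty closed
subset of that ball, and every open neighbourhood of `L` eventually contains the sequence.
If `L` split into two disjoint closed pieces, they would have disjoint `δ`-thickenings; the
sequence eventually stays in the union of the `δ/2`-thickenings and, once its steps are
shorter than `δ/2`, cannot pass from one to the other. It thus eventually stays near one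
piece and cannot cluster at the other.
-/

open Filter Topology Metric

theorem eventually_or_eventually_not_of_eventually_iff_succ {p : ℕ → Prop}
    (h : ∀ᶠ k in atTop, p k ↔ p (k + 1)) : (∀ᶠ k in atTop, p k) ∨ ∀ᶠ k in atTop, ¬p k := by
  obtain ⟨N, hN⟩ := eventually_atTop.1 h
  by_cases hpN : p N
  · exact .inl <| eventually_atTop.2
      ⟨N, fun k hk => Nat.le_induction hpN (fun n hn ih => (hN n hn).1 ih) k hk⟩
  · exact .inr <| eventually_atTop.2
      ⟨N, fun k hk => Nat.le_induction hpN (fun n hn ih => mt (hN n hn).2 ih) k hk⟩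

section ClusterPoints

variable {X ι : Type*} [TopologicalSpace X] {l : Filter ι} {f : ι → X} {K : Set X}

theorem setOf_mapClusterPt_subset_closure {S : Set X} (hS : ∀ᶠ i in l, f i ∈ S) :
    {a | MapClusterPt a l f} ⊆ closure S :=
  fun _ ha => ha.mem_closure_of_mem _ hS

theorem IsCompact.nonempty_setOf_mapClusterPt [l.NeBot] (hK : IsCompact K)
    (hfK : ∀ᶠ i in l, f i ∈ K) : {a | MapClusterPt a l f}.Nonempty :=
  let ⟨a, _, ha⟩ := hK.exists_mapClusterPt (tendsto_principal.2 hfK)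
  ⟨a, ha⟩

theorem IsCompact.isCompact_setOf_mapClusterPt [R1Space X] (hK : IsCompact K)
    (hfK : ∀ᶠ i in l, f i ∈ K) : IsCompact {a | MapClusterPt a l f} :=
  hK.closure.of_isClosed_subset isClosed_setOfPred_clusterPt
    (setOf_mapClusterPt_subset_closure hfK)

theorem IsCompact.eventually_mem_of_setOf_mapClusterPt_subset {W : Set X} (hK : IsCompact K)
    (hfK : ∀ᶠ i in l, f i ∈ K) (hW : IsOpen W) (hLW : {a | MapClusterPt a l f} ⊆ W) :
    ∀ᶠ i in l, f i ∈ W := by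
  by_contra h
  obtain ⟨a, ⟨-, haW⟩, ha⟩ := (hK.diff hW).exists_mapClusterPt_of_frequently
    ((not_eventually.1 h).and_eventually hfK |>.mono fun _ hi => ⟨hi.2, hi.1⟩)
  exact haW (hLW ha)

theorem disjoint_setOf_mapClusterPt_of_eventually {S T : Set X} (hS : ∀ᶠ i in l, f i ∈ S)
    (hST : Disjoint S T) (hT : IsOpen T) : Disjoint {a | MapClusterPt a l f} T :=
  (hST.closure_left hT).mono_left (setOf_mapClusterPt_subset_closure hS)

end ClusterPoints

theorem Metric.notMem_thickening_half_of_dist_lt {α : Type*} [PseudoMetricSpace α]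
    {s t : Set α} {δ : ℝ} {p q : α} (hδ : 0 ≤ δ)
    (hst : Disjoint (thickening δ s) (thickening δ t))
    (hp : p ∈ thickening (δ / 2) s) (hpq : dist q p < δ / 2) : q ∉ thickening (δ / 2) t := by
  intro hq
  have hqs : q ∈ thickening δ s := by
    simpa using thickening_thickening_subset _ _ s (mem_thickening_iff.2 ⟨p, hp, hpq⟩)
  exact hst.ne_of_mem hqs (thickening_mono (half_le_self hδ) t hq) rfl

theorem IsCompact.isPreconnected_setOf_mapClusterPt_of_tendsto_dist_succ {α : Type*}
    [PseudoMetricSpace α] {K : Set α} {x : ℕ → α} (hK : IsCompact K) (hxK : ∀ᶠ k in atTop, x k ∈ K)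
    (hstep : Tendsto (fun k => dist (x (k + 1)) (x k)) atTop (𝓝 0)) :
    IsPreconnected {p | MapClusterPt p atTop x} := by
  set L := {p | MapClusterPt p atTop x}
  have hLclosed : IsClosed L := isClosed_setOfPred_clusterPt
  rw [isPreconnected_iff_subset_of_fully_disjoint_closed hLclosed]
  intro u v hu hv hLuv huv
  obtain ⟨δ, hδ, hδdisj⟩ := (huv.mono (Set.inter_subset_right (s := L)) Set.inter_subset_right)
    |>.exists_thickenings ((hK.isCompact_setOf_mapClusterPt hxK).inter_right hu)
      (hLclosed.inter hv)
  set U := thickening (δ / 2) (L ∩ u)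
  set V := thickening (δ / 2) (L ∩ v)
  have hUV : Disjoint U V := hδdisj.mono (thickening_mono (half_le_self hδ.le) _)
    (thickening_mono (half_le_self hδ.le) _)
  have hLUV : L ⊆ U ∪ V := fun p hp => (hLuv hp).imp
    (fun hpu => self_subset_thickening (half_pos hδ) _ ⟨hp, hpu⟩)
    (fun hpv => self_subset_thickening (half_pos hδ) _ ⟨hp, hpv⟩)
  have hev : ∀ᶠ k in atTop, x k ∈ U ∪ V :=
    hK.eventually_mem_of_setOf_mapClusterPt_subset hxK
      (isOpen_thickening.union isOpen_thickening) hLUV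
  -- Late steps are shorter than the gap between `U` and `V`, so they never cross it.
  have hstay : ∀ᶠ k in atTop, x k ∈ U ↔ x (k + 1) ∈ U := by
    filter_upwards [hev, (tendsto_add_atTop_nat 1).eventually hev,
      hstep.eventually_lt_const (half_pos hδ)] with k hk hk1 hd
    refine ⟨fun hU => hk1.resolve_right ?_, fun hU1 => hk.resolve_right fun hV => ?_⟩
    · exact notMem_thickening_half_of_dist_lt hδ.le hδdisj hU hd
    · exact notMem_thickening_half_of_dist_lt hδ.le hδdisj.symm hV hd hU1
  rcases eventually_or_eventually_not_of_eventually_iff_succ hstay with hU | hnotU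
  · refine .inl fun p hp => (hLuv hp).resolve_right fun hpv => ?_
    exact (disjoint_setOf_mapClusterPt_of_eventually hU hUV isOpen_thickening).ne_of_mem hp
      (self_subset_thickening (half_pos hδ) _ ⟨hp, hpv⟩) rfl
  · have hV : ∀ᶠ k in atTop, x k ∈ V :=
      (hev.and hnotU).mono fun _ hk => hk.1.resolve_left hk.2
    refine .inr fun p hp => (hLuv hp).resolve_left fun hpu => ?_
    exact (disjoint_setOf_mapClusterPt_of_eventually hV hUV.symm isOpen_thickening).ne_of_mem hp
      (self_subset_thickening (half_pos hδ) _ ⟨hp, hpu⟩) rfl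

/-- Ostrowski's theorem on limit sets: for a bounded sequence `(x^k)` in a finite-dimensional
real normed vector space with `‖x^{k+1} - x^k‖ → 0`, the set of cluster points of `(x^k)` is
nonempty, compact, and connected. -/
theorem ostrowski_limit_set {X : Type*}
    [NormedAddCommGroup X] [NormedSpace ℝ X] [FiniteDimensional ℝ X]
    (x : ℕ → X) (hbd : ∃ C, ∀ k, ‖x k‖ ≤ C)
    (hstep : Tendsto (fun k => ‖x (k + 1) - x k‖) atTop (𝓝 0)) :
    {p | MapClusterPt p atTop x}.Nonempty ∧
    IsCompact {p | MapClusterPt p atTop x} ∧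
    IsConnected {p | MapClusterPt p atTop x} := by
  obtain ⟨C, hC⟩ := hbd
  have hK : IsCompact (closedBall (0 : X) C) := isCompact_closedBall 0 C
  have hxK : ∀ᶠ k in atTop, x k ∈ closedBall (0 : X) C :=
    .of_forall fun k => mem_closedBall_zero_iff.2 (hC k)
  have hne := hK.nonempty_setOf_mapClusterPt hxK
  refine ⟨hne, hK.isCompact_setOf_mapClusterPt hxK, hne, ?_⟩
  exact hK.isPreconnected_setOf_mapClusterPt_of_tendsto_dist_succ hxK
    (by simpa only [dist_eq_norm] using hstep)
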